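/- arXiv:1304.0874 — 3 statements merged into one kernel-verified Lean document; each statement's English description precedes it below -/
import Mathlib

section
/- Let f(X) = a_0 + a_1 X + ... + a_n X^n be a polynomial with integer coefficients and p a prime. If ν_p(a_i)/i > ν_p(a_n)/n for all i = 1, ..., n-1, ν_p(a_0) = 0, and gcd(ν_p(a_n), n) = 1, then f is irreducible over the rationals. -/
/-!
Weight `X` by `c = p ^ (μ / n)`, where `μ = ν_p(a_n)`. The hypotheses say that the `p`-adic Gauss
norm `max_i |a_i|_p c^i` of `f` is `1` and is attained both at `i = 0` and at `i = n`: the Newton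
polygon of `f` is the single segment from `(0, 0)` to `(n, μ)`. The Gauss norm is multiplicative,
so every factor `g` of `f` over `ℚ` inherits this property; comparing its constant and leading
terms gives `μ · deg g = n · (ν_p(lc g) - ν_p(g(0)))`, hence `n ∣ deg g` as `gcd(μ, n) = 1`.
-/

open Polynomial Finset

namespace Polynomial

variable {R : Type*} [Ring R] {v : AbsoluteValue R ℝ} {c : ℝ}

/-- In Newton-polygon terms (with `val = -log v`): the polygon of `f` is one segment, of slope
`log c`. -/
def IsPure (v : AbsoluteValue R ℝ) (c : ℝ) (f : R[X]) : Prop :=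
  f.gaussNorm v c = v (f.coeff 0) ∧ f.gaussNorm v c = v f.leadingCoeff * c ^ f.natDegree

theorem isPure_of_forall_le (hc : 0 ≤ c) {f : R[X]}
    (hle : ∀ i, v (f.coeff i) * c ^ i ≤ v (f.coeff 0))
    (htop : v f.leadingCoeff * c ^ f.natDegree = v (f.coeff 0)) :
    f.IsPure v c := by
  have hnorm : f.gaussNorm v c = v (f.coeff 0) := by
    obtain ⟨i, hi⟩ := f.exists_eq_gaussNorm v c
    exact le_antisymm (hi ▸ hle i) (by simpa using f.le_gaussNorm v hc 0)
  exact ⟨hnorm, hnorm.trans htop.symm⟩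

theorem gaussNorm_eq_apply_coeff_zero_of_mul (hna : IsNonarchimedean v) (hc : 0 < c)
    {g h : R[X]} (h0 : (g * h).coeff 0 ≠ 0)
    (hnorm : (g * h).gaussNorm v c = v ((g * h).coeff 0)) :
    g.gaussNorm v c = v (g.coeff 0) := by
  rw [mul_coeff_zero] at h0 hnorm
  have hg : v (g.coeff 0) ≤ g.gaussNorm v c := by simpa using g.le_gaussNorm v hc.le 0
  have hh : v (h.coeff 0) ≤ h.gaussNorm v c := by simpa using h.le_gaussNorm v hc.le 0
  rw [gaussNorm_mul hna hc, map_mul] at hnorm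
  refine ((mul_eq_mul_iff_eq_and_eq_of_pos hg hh ?_ ?_).mp hnorm.symm).1.symm
  · exact v.pos (left_ne_zero_of_mul h0)
  · exact (v.pos (right_ne_zero_of_mul h0)).trans_le hh

theorem gaussNorm_eq_apply_leadingCoeff_mul_pow_of_mul [NoZeroDivisors R]
    (hna : IsNonarchimedean v) (hc : 0 < c) {g h : R[X]} (hgh : g * h ≠ 0)
    (hnorm : (g * h).gaussNorm v c = v (g * h).leadingCoeff * c ^ (g * h).natDegree) :
    g.gaussNorm v c = v g.leadingCoeff * c ^ g.natDegree := by
  have hg0 := left_ne_zero_of_mul hgh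
  have hh0 := right_ne_zero_of_mul hgh
  rw [leadingCoeff_mul, natDegree_mul hg0 hh0, gaussNorm_mul hna hc, map_mul, pow_add,
    mul_mul_mul_comm] at hnorm
  have hg := g.le_gaussNorm v hc.le g.natDegree
  have hh := h.le_gaussNorm v hc.le h.natDegree
  refine ((mul_eq_mul_iff_eq_and_eq_of_pos hg hh ?_ ?_).mp hnorm.symm).1.symm
  · exact mul_pos (v.pos (leadingCoeff_ne_zero.mpr hg0)) (pow_pos hc _)
  · exact (mul_pos (v.pos (leadingCoeff_ne_zero.mpr hh0)) (pow_pos hc _)).trans_le hh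

theorem IsPure.of_mul_left [NoZeroDivisors R] (hna : IsNonarchimedean v) (hc : 0 < c)
    {g h : R[X]} (h0 : (g * h).coeff 0 ≠ 0) (hpure : (g * h).IsPure v c) : g.IsPure v c :=
  ⟨gaussNorm_eq_apply_coeff_zero_of_mul hna hc h0 hpure.1,
    gaussNorm_eq_apply_leadingCoeff_mul_pow_of_mul hna hc (fun h' => h0 (by simp [h'])) hpure.2⟩

theorem irreducible_of_natDegree_dvd {K : Type*} [Field K] {f : K[X]} (hf : 0 < f.natDegree)
    (hdvd : ∀ g h : K[X], g * h = f → f.natDegree ∣ g.natDegree) :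
    Irreducible f := by
  refine ⟨fun hu => hf.ne' (natDegree_eq_zero_of_isUnit hu), fun g h hgh => ?_⟩
  have hf0 : f ≠ 0 := ne_zero_of_natDegree_gt hf
  have hg0 : g ≠ 0 := left_ne_zero_of_mul (hgh ▸ hf0)
  have hh0 : h ≠ 0 := right_ne_zero_of_mul (hgh ▸ hf0)
  have hdeg : g.natDegree + h.natDegree = f.natDegree := by rw [hgh, natDegree_mul hg0 hh0]
  have isUnit_of : ∀ q : K[X], q ≠ 0 → q.natDegree = 0 → IsUnit q := fun q hq hq0 =>
    isUnit_iff_degree_eq_zero.mpr (by rw [degree_eq_natDegree hq, hq0, Nat.cast_zero])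
  rcases Nat.eq_zero_or_pos g.natDegree with hg | hg
  · exact .inl (isUnit_of g hg0 hg)
  · have := Nat.le_of_dvd hg (hdvd g h hgh.symm)
    exact .inr (isUnit_of h hh0 (by omega))

end Polynomial

namespace Rat.AbsoluteValue

variable (p : ℕ) [Fact p.Prime]

theorem isNonarchimedean_padic : IsNonarchimedean (padic p) := fun x y => by
  simp only [padic_eq_padicNorm]
  exact_mod_cast padicNorm.nonarchimedean (p := p) (q := x) (r := y)

theorem padic_mul_rpow_pow {x : ℚ} (hx : x ≠ 0) (s : ℝ) (i : ℕ) :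
    padic p x * ((p : ℝ) ^ s) ^ i = (p : ℝ) ^ (s * i - padicValRat p x) := by
  have hp : (0 : ℝ) < p := by exact_mod_cast (Fact.out : p.Prime).pos
  rw [padic_eq_padicNorm, padicNorm.eq_zpow_of_nonzero hx, Rat.cast_zpow, Rat.cast_natCast,
    ← Real.rpow_intCast, ← Real.rpow_natCast, ← Real.rpow_mul hp.le, sub_eq_add_neg,
    Real.rpow_add hp, mul_comm]
  push_cast
  rfl

variable {p}

theorem padic_intCast_mul_rpow_pow_le_one (z : ℤ) {μ n i : ℕ} (hn : 0 < n)
    (h : μ * i ≤ n * padicValInt p z) :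
    padic p z * ((p : ℝ) ^ ((μ : ℝ) / n)) ^ i ≤ 1 := by
  rcases eq_or_ne z 0 with rfl | hz
  · simp
  rw [padic_mul_rpow_pow p (Int.cast_ne_zero.mpr hz), padicValRat.of_int]
  refine Real.rpow_le_one_of_one_le_of_nonpos (by exact_mod_cast (Fact.out : p.Prime).one_le) ?_
  rw [sub_nonpos, div_mul_eq_mul_div, div_le_iff₀ (by positivity)]
  exact_mod_cast (mul_comm (padicValInt p z) n ▸ h)

theorem padic_intCast_mul_rpow_pow_eq_one {z : ℤ} (hz : z ≠ 0) {μ n i : ℕ} (hn : 0 < n)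
    (h : μ * i = n * padicValInt p z) :
    padic p z * ((p : ℝ) ^ ((μ : ℝ) / n)) ^ i = 1 := by
  have hexp : (μ : ℝ) / n * i - padicValInt p z = 0 := by
    rw [sub_eq_zero, div_mul_eq_mul_div, div_eq_iff (by positivity)]
    exact_mod_cast h.trans (mul_comm _ _)
  rw [padic_mul_rpow_pow p (Int.cast_ne_zero.mpr hz), padicValRat.of_int, Int.cast_natCast, hexp,
    Real.rpow_zero]

theorem dvd_of_padic_mul_rpow_pow_eq {x y : ℚ} (hx : x ≠ 0) (hy : y ≠ 0) {μ n d : ℕ}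
    (hn : 0 < n) (h : padic p x * ((p : ℝ) ^ ((μ : ℝ) / n)) ^ d = padic p y) :
    n ∣ μ * d := by
  have hp : p.Prime := Fact.out
  rw [← mul_one (padic p y), ← pow_zero ((p : ℝ) ^ ((μ : ℝ) / n)), padic_mul_rpow_pow p hx,
    padic_mul_rpow_pow p hy, Real.rpow_right_inj (by exact_mod_cast hp.pos)
      (by exact_mod_cast hp.one_lt.ne')] at h
  have hZ : ((μ * d : ℕ) : ℤ) = n * (padicValRat p x - padicValRat p y) := by
    have : (n : ℝ) ≠ 0 := by positivity
    field_simp at h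
    push_cast at h ⊢
    exact_mod_cast (by linarith : (μ : ℝ) * d = n * (padicValRat p x - padicValRat p y))
  exact Int.natCast_dvd_natCast.mp ⟨_, hZ⟩

theorem irreducible_of_isPure_padic {F : ℚ[X]} {μ n : ℕ} (hn : 0 < n) (hdeg : F.natDegree = n)
    (hF0 : F.coeff 0 ≠ 0) (hcop : μ.Coprime n)
    (hpure : F.IsPure (padic p) ((p : ℝ) ^ ((μ : ℝ) / n))) :
    Irreducible F := by
  refine irreducible_of_natDegree_dvd (hdeg ▸ hn) fun g h hgh => hdeg ▸ ?_
  rw [← hgh, mul_coeff_zero] at hF0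
  have hg0 : g.coeff 0 ≠ 0 := left_ne_zero_of_mul hF0
  have hg : g.leadingCoeff ≠ 0 := leadingCoeff_ne_zero.mpr (by rintro rfl; simp at hg0)
  have hc : 0 < (p : ℝ) ^ ((μ : ℝ) / n) :=
    Real.rpow_pos_of_pos (by exact_mod_cast (Fact.out : p.Prime).pos) _
  have hgpure := (hgh ▸ hpure).of_mul_left (isNonarchimedean_padic p) hc (mul_coeff_zero g h ▸ hF0)
  exact hcop.symm.dvd_of_dvd_mul_left
    (dvd_of_padic_mul_rpow_pow_eq hg hg0 hn (hgpure.2.symm.trans hgpure.1))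

end Rat.AbsoluteValue

open Rat.AbsoluteValue in
theorem dumas_criterion (n : ℕ) (hn : 1 ≤ n) (a : ℕ → ℤ)
    (ha0 : a 0 ≠ 0) (han : a n ≠ 0)
    (p : ℕ) (hp : p.Prime)
    (h1 : ∀ i, 1 ≤ i → i < n → n * padicValInt p (a i) > i * padicValInt p (a n))
    (h2 : padicValInt p (a 0) = 0)
    (h3 : Nat.gcd (padicValInt p (a n)) n = 1) :
    Irreducible ((∑ i ∈ range (n+1), C (a i) * X ^ i).map (Int.castRingHom ℚ)) := by
  have : Fact p.Prime := ⟨hp⟩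
  set μ := padicValInt p (a n)
  set F := (∑ i ∈ range (n+1), C (a i) * X ^ i).map (Int.castRingHom ℚ)
  have hcoeff (k : ℕ) : F.coeff k = if k ≤ n then (a k : ℚ) else 0 := by simp [F, coeff_X_pow]
  have hdeg : F.natDegree = n := natDegree_eq_of_le_of_coeff_ne_zero
    (natDegree_le_iff_coeff_eq_zero.mpr fun k hk => by simp [hcoeff, hk.not_ge])
    (by simpa [hcoeff] using han)
  have hF0 : F.coeff 0 ≠ 0 := by simpa [hcoeff] using ha0
  have hbot : padic p (F.coeff 0) = 1 := by
    rw [hcoeff, if_pos n.zero_le]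
    simpa using padic_intCast_mul_rpow_pow_eq_one (p := p) ha0 hn (μ := μ) (i := 0) (by simp [h2])
  have hpure : F.IsPure (padic p) ((p : ℝ) ^ ((μ : ℝ) / n)) := by
    refine isPure_of_forall_le (by positivity) (fun i => hbot ▸ ?_) ?_
    · rw [hcoeff]
      split_ifs with hi
      · refine padic_intCast_mul_rpow_pow_le_one _ hn ?_
        rcases Nat.eq_zero_or_pos i with rfl | hpos
        · simp
        rcases hi.lt_or_eq with hlt | rfl
        · exact (mul_comm μ i ▸ h1 i hpos hlt).le
        · exact (mul_comm μ i).le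
      · simp
    · rw [hbot, leadingCoeff, hdeg, hcoeff, if_pos le_rfl]
      exact padic_intCast_mul_rpow_pow_eq_one han hn (mul_comm μ n)
  exact irreducible_of_isPure_padic hn hdeg hF0 (Nat.coprime_iff_gcd_eq_one.mpr h3) hpure
end

section
/- Let f(X) = a_0 + a_1 X + ... + a_n X^n ∈ Z[X] with a_0 a_n ≠ 0. Suppose there exist two distinct primes p and q, a positive integer k, and an index j ∈ {1, ..., n-1} which is not a multiple of n/gcd(k,n), such that: (i) p divides a_i for all i ≠ j, p does not divide a_j, p^2 does not divide a_0, and p^2 does not divide a_n; (ii) q does not divide a_0, q^k divides a_i for i = 1, ..., n, and q^{k+1} does not divide a_n. Then f is irreducible over Q. -/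
/-!
Suppose `f = g * h` over `ℤ` with both factors of positive degree (Gauss's lemma reduces
irreducibility over `ℚ` to this). Modulo `p` the product is a monomial `u X^j`, so both factors
reduce to monomials; as `p²` divides neither the constant nor the leading coefficient of `f`, one
reduction keeps the full degree of its factor and the other is a constant, so some factor has
degree exactly `j`. At `q` the Newton polygon of `f` is the single segment from `(0, 0)` to
`(n, k)`. In terms of the Gauss norm for the `q`-adic absolute value with weight `c = q^(k/n)`,
which is multiplicative, `f` has norm `|f₀|`, and this forces
`|g_lead| c^(deg g) = |g₀| = 1` for each factor, i.e. `n ∣ deg g · k`. Hence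
`n / gcd(k, n)` divides the degree `j` of a factor.
-/

open Polynomial Finset

theorem Nat.div_gcd_dvd_of_dvd_mul {n d k : ℕ} (hn : n ≠ 0) (h : n ∣ d * k) :
    n / Nat.gcd k n ∣ d := by
  rw [Nat.gcd_comm]
  refine (Nat.coprime_div_gcd_div_gcd
    (Nat.gcd_pos_of_pos_left k (Nat.pos_of_ne_zero hn))).dvd_of_dvd_mul_right ?_
  rw [← Nat.mul_div_assoc _ (Nat.gcd_dvd_right n k)]
  exact Nat.div_dvd_div (Nat.gcd_dvd_left n k) h

namespace Polynomial

theorem coeff_sum_range_C_mul_X_pow {R : Type*} [Semiring R] (a : ℕ → R) (n i : ℕ) :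
    (∑ m ∈ range (n + 1), C (a m) * X ^ m).coeff i = if i ≤ n then a i else 0 := by
  simp [finsetSum_coeff, coeff_C_mul, coeff_X_pow]

theorem natDegree_sum_range_C_mul_X_pow {R : Type*} [Semiring R] (a : ℕ → R) {n : ℕ}
    (han : a n ≠ 0) : (∑ m ∈ range (n + 1), C (a m) * X ^ m).natDegree = n :=
  natDegree_eq_of_le_of_coeff_ne_zero
    (natDegree_le_iff_coeff_eq_zero.2 fun i hi => by
      simp [hi.not_ge])
    (by simpa [coeff_sum_range_C_mul_X_pow] using han)

theorem IsPrimitive.isUnit_of_natDegree_eq_zero {R : Type*} [CommSemiring R] {f : R[X]}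
    (hf : f.IsPrimitive) (hdeg : f.natDegree = 0) : IsUnit f := by
  rw [eq_C_of_natDegree_eq_zero hdeg] at hf ⊢
  exact isUnit_C.2 (isPrimitive_iff_isUnit_of_C_dvd.1 hf _ dvd_rfl)

theorem irreducible_map_intCast_of_forall_mul_eq {f : ℤ[X]} (hf : 0 < f.natDegree)
    (hfac : ∀ g h : ℤ[X], f = g * h → g.natDegree = 0 ∨ h.natDegree = 0) :
    Irreducible (f.map (Int.castRingHom ℚ)) := by
  have hprim := f.isPrimitive_primPart
  have hc : f.content ≠ 0 := by
    rw [Ne, content_eq_zero_iff]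
    rintro rfl
    simp at hf
  have hirr : Irreducible f.primPart := by
    refine ⟨fun hu => ?_, fun g h hgh => ?_⟩
    · have := natDegree_eq_zero_of_isUnit hu
      rw [natDegree_primPart] at this
      omega
    · have hdeg := hfac (C f.content * g) h
        (by rw [mul_assoc, ← hgh, ← eq_C_content_mul_primPart])
      rw [natDegree_C_mul hc] at hdeg
      exact hdeg.imp
        (isPrimitive_of_dvd hprim (Dvd.intro _ hgh.symm)).isUnit_of_natDegree_eq_zero
        (isPrimitive_of_dvd hprim (Dvd.intro_left _ hgh.symm)).isUnit_of_natDegree_eq_zero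
  rw [eq_C_content_mul_primPart f, Polynomial.map_mul, map_C,
    irreducible_isUnit_mul (isUnit_C.2 (by simpa using hc))]
  exact (IsPrimitive.Int.irreducible_iff_irreducible_map_cast hprim).1 hirr

theorem natDegree_eq_or_natDegree_eq_of_dvd_coeff {R : Type*} [CommRing R] [IsDomain R] {p : R}
    {g h : R[X]} {j : ℕ} (hp : Prime p) (hg : 0 < g.natDegree) (hh : 0 < h.natDegree)
    (hdvd : ∀ i ≠ j, p ∣ (g * h).coeff i) (hj : ¬ p ∣ (g * h).coeff j)
    (h0 : ¬ p ^ 2 ∣ (g * h).coeff 0) (hlead : ¬ p ^ 2 ∣ (g * h).leadingCoeff) :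
    g.natDegree = j ∨ h.natDegree = j := by
  have := (Ideal.span_singleton_prime hp.ne_zero).2 hp
  set φ := Ideal.Quotient.mk (Ideal.span {p})
  have hφ (x : R) : φ x = 0 ↔ p ∣ x := Ideal.Quotient.eq_zero_iff_dvd p x
  have hu : φ ((g * h).coeff j) ≠ 0 := fun e => hj ((hφ _).1 e)
  have hmap : g.map φ * h.map φ = C (φ ((g * h).coeff j)) * X ^ j := by
    ext i
    rw [← Polynomial.map_mul, coeff_map, coeff_C_mul_X_pow]
    split_ifs with hij
    · rw [hij]
    · exact (hφ _).2 (hdvd i hij)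
  have hne : g.map φ * h.map φ ≠ 0 := by simp [hmap, hu]
  -- degree and trailing degree are both additive, and both equal `j` on `u X^j`
  have hdeg := natDegree_mul (left_ne_zero_of_mul hne) (right_ne_zero_of_mul hne)
  have htrail := natTrailingDegree_mul (left_ne_zero_of_mul hne) (right_ne_zero_of_mul hne)
  rw [hmap, natDegree_C_mul_X_pow _ _ hu] at hdeg
  rw [hmap, natTrailingDegree_mul_X_pow (by simpa using hu), natTrailingDegree_C,
    zero_add] at htrail
  have := (g.map φ).natTrailingDegree_le_natDegree
  have := (h.map φ).natTrailingDegree_le_natDegree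
  have hconst : (g.map φ).natTrailingDegree = 0 ∨ (h.map φ).natTrailingDegree = 0 := by
    by_contra! hpos
    refine h0 ?_
    rw [mul_coeff_zero, sq]
    refine mul_dvd_mul ((hφ _).1 ?_) ((hφ _).1 ?_)
    · simpa using coeff_eq_zero_of_lt_natTrailingDegree (Nat.pos_of_ne_zero hpos.1)
    · simpa using coeff_eq_zero_of_lt_natTrailingDegree (Nat.pos_of_ne_zero hpos.2)
  have htop : (g.map φ).natDegree = g.natDegree ∨ (h.map φ).natDegree = h.natDegree := by
    by_contra! hlt
    refine hlead ?_
    rw [leadingCoeff_mul, sq]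
    refine mul_dvd_mul ((hφ _).1 ?_) ((hφ _).1 ?_)
    · exact not_not.1 fun hne => hlt.1 (natDegree_map_of_leadingCoeff_ne_zero φ hne)
    · exact not_not.1 fun hne => hlt.2 (natDegree_map_of_leadingCoeff_ne_zero φ hne)
  omega

section GaussNorm

variable {R : Type*} [Ring R] {v : AbsoluteValue R ℝ} {c : ℝ}

theorem gaussNorm_le_of_forall {B : ℝ} (hB : 0 ≤ B) (f : R[X])
    (hf : ∀ i, v (f.coeff i) * c ^ i ≤ B) : f.gaussNorm v c ≤ B := by
  unfold gaussNorm
  split_ifs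
  · exact Finset.sup'_le _ _ fun i _ => hf i
  · exact hB

theorem abv_leadingCoeff_mul_pow_eq_of_mul [NoZeroDivisors R] (hna : IsNonarchimedean v)
    (hc : 0 < c) {g h : R[X]} (h0 : (g * h).coeff 0 ≠ 0)
    (hbound : ∀ i, v ((g * h).coeff i) * c ^ i ≤ v ((g * h).coeff 0))
    (hlead : v (g * h).leadingCoeff * c ^ (g * h).natDegree = v ((g * h).coeff 0)) :
    v g.leadingCoeff * c ^ g.natDegree = v (g.coeff 0) := by
  have hg : g ≠ 0 := by rintro rfl; simp at h0
  have hh : h ≠ 0 := by rintro rfl; simp at h0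
  have hnorm : v (g.coeff 0) * v (h.coeff 0) = g.gaussNorm v c * h.gaussNorm v c := by
    rw [← gaussNorm_mul hna hc, ← v.map_mul, ← mul_coeff_zero]
    refine le_antisymm ?_ (gaussNorm_le_of_forall (v.nonneg _) _ hbound)
    simpa using (g * h).le_gaussNorm v hc.le 0
  rw [mul_coeff_zero] at h0 hlead
  rw [leadingCoeff_mul, natDegree_mul hg hh, pow_add, v.map_mul, v.map_mul,
    mul_mul_mul_comm] at hlead
  have hg0 : 0 < v (g.coeff 0) := v.pos (left_ne_zero_of_mul h0)
  have hh0 : 0 < v (h.coeff 0) := v.pos (right_ne_zero_of_mul h0)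
  have hg1 : v (g.coeff 0) ≤ g.gaussNorm v c := by simpa using g.le_gaussNorm v hc.le 0
  have hh1 : v (h.coeff 0) ≤ h.gaussNorm v c := by simpa using h.le_gaussNorm v hc.le 0
  obtain ⟨hgn, hhn⟩ :=
    (mul_eq_mul_iff_eq_and_eq_of_pos' hg1 hh1 (hg0.trans_le hg1) hh0).1 hnorm
  have hg2 := g.le_gaussNorm v hc.le g.natDegree
  have hh2 := h.le_gaussNorm v hc.le h.natDegree
  rw [coeff_natDegree, ← hgn] at hg2
  rw [coeff_natDegree, ← hhn] at hh2
  have hhlead : 0 < v h.leadingCoeff * c ^ h.natDegree :=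
    mul_pos (v.pos (leadingCoeff_ne_zero.2 hh)) (pow_pos hc _)
  exact ((mul_eq_mul_iff_eq_and_eq_of_pos' hg2 hh2 hg0 hhlead).1 hlead).1

end GaussNorm

end Polynomial

namespace Int

variable (q : ℕ) [Fact q.Prime]

noncomputable def padicAbv : AbsoluteValue ℤ ℝ :=
  (Rat.AbsoluteValue.padic q).comp (f := Int.castRingHom ℚ) Int.cast_injective

theorem padicAbv_apply (x : ℤ) : padicAbv q x = padicNorm q x := rfl

theorem isNonarchimedean_padicAbv : IsNonarchimedean (padicAbv q) := fun x y => by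
  rw [padicAbv_apply, padicAbv_apply, padicAbv_apply, Int.cast_add, ← Rat.cast_max, Rat.cast_le]
  exact padicNorm.nonarchimedean

theorem padicAbv_eq_one_iff (x : ℤ) : padicAbv q x = 1 ↔ ¬ (q : ℤ) ∣ x := by
  rw [padicAbv_apply, ← padicNorm.int_eq_one_iff]
  exact_mod_cast Iff.rfl

theorem padicAbv_mul_rpow_pow {x : ℤ} (hx : x ≠ 0) (y : ℝ) (i : ℕ) :
    padicAbv q x * ((q : ℝ) ^ y) ^ i = (q : ℝ) ^ (i * y - padicValInt q x) := by
  have hq : (0 : ℝ) < q := by exact_mod_cast (Fact.out : q.Prime).pos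
  rw [padicAbv_apply, padicNorm.eq_zpow_of_nonzero (by exact_mod_cast hx), padicValRat.of_int,
    Rat.cast_zpow, Rat.cast_natCast, ← Real.rpow_intCast, ← Real.rpow_mul_natCast hq.le,
    ← Real.rpow_add hq]
  push_cast
  ring_nf

end Int

namespace Polynomial

variable {q : ℕ} [Fact q.Prime] {k : ℕ}

theorem padicAbv_coeff_mul_rpow_pow_le_one {f : ℤ[X]} (h0 : ¬ (q : ℤ) ∣ f.coeff 0)
    (hdvd : ∀ i ≠ 0, (q : ℤ) ^ k ∣ f.coeff i) (i : ℕ) :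
    Int.padicAbv q (f.coeff i) * ((q : ℝ) ^ ((k : ℝ) / f.natDegree)) ^ i ≤ 1 := by
  rcases Nat.eq_zero_or_pos i with rfl | hi
  · rw [pow_zero, mul_one, (Int.padicAbv_eq_one_iff q _).2 h0]
  rcases eq_or_ne (f.coeff i) 0 with hz | hz
  · simp [hz]
  rw [Int.padicAbv_mul_rpow_pow q hz]
  refine Real.rpow_le_one_of_one_le_of_nonpos (by exact_mod_cast (Fact.out : q.Prime).one_le) ?_
  have hin : i ≤ f.natDegree := le_natDegree_of_ne_zero hz
  have hk : k ≤ padicValInt q (f.coeff i) :=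
    ((padicValInt_dvd_iff k _).1 (hdvd i hi.ne')).resolve_left hz
  rw [sub_nonpos, mul_div_assoc', div_le_iff₀ (by norm_cast; omega)]
  calc (i : ℝ) * k ≤ f.natDegree * k := by gcongr
    _ ≤ padicValInt q (f.coeff i) * f.natDegree := by rw [mul_comm]; gcongr

theorem natDegree_mul_dvd_of_pow_dvd_coeff {g h : ℤ[X]}
    (h0 : ¬ (q : ℤ) ∣ (g * h).coeff 0) (hdvd : ∀ i ≠ 0, (q : ℤ) ^ k ∣ (g * h).coeff i)
    (hlead : ¬ (q : ℤ) ^ (k + 1) ∣ (g * h).leadingCoeff) :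
    (g * h).natDegree ∣ g.natDegree * k := by
  have hgh : g * h ≠ 0 := by rintro hz; simp [hz] at h0
  have hg0 : ¬ (q : ℤ) ∣ g.coeff 0 := fun hd => h0 (mul_coeff_zero g h ▸ hd.mul_right _)
  set n := (g * h).natDegree
  rcases Nat.eq_zero_or_pos n with hn | hn
  · have := natDegree_mul (left_ne_zero_of_mul hgh) (right_ne_zero_of_mul hgh)
    simp [show g.natDegree = 0 by omega]
  have hq : (1 : ℝ) < q := by exact_mod_cast (Fact.out : q.Prime).one_lt
  have hvalLead : padicValInt q (g * h).leadingCoeff = k := by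
    have h1 := (padicValInt_dvd_iff k (g * h).leadingCoeff).1 (hdvd n hn.ne')
    have h2 := (padicValInt_dvd_iff (k + 1) _).not.1 hlead
    omega
  have key := abv_leadingCoeff_mul_pow_eq_of_mul (g := g) (h := h)
    (Int.isNonarchimedean_padicAbv q) (by positivity : 0 < (q : ℝ) ^ ((k : ℝ) / n))
    (fun hz => h0 (hz ▸ dvd_zero _))
    (by rw [(Int.padicAbv_eq_one_iff q _).2 h0]; exact padicAbv_coeff_mul_rpow_pow_le_one h0 hdvd)
    (by rw [Int.padicAbv_mul_rpow_pow q (leadingCoeff_ne_zero.2 hgh), hvalLead,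
      (Int.padicAbv_eq_one_iff q _).2 h0, mul_div_cancel₀ _ (by positivity), sub_self,
      Real.rpow_zero])
  rw [Int.padicAbv_mul_rpow_pow q (leadingCoeff_ne_zero.2 (left_ne_zero_of_mul hgh)),
    (Int.padicAbv_eq_one_iff q _).2 hg0, ← Real.rpow_zero (q : ℝ),
    Real.rpow_right_inj (by linarith) hq.ne', sub_eq_zero, mul_div_assoc',
    div_eq_iff (by positivity)] at key
  exact Dvd.intro_left _ (by exact_mod_cast key.symm)

end Polynomial

theorem corollary_1_5_general (n : ℕ) (hn : 2 ≤ n) (a : ℕ → ℤ)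
    (han : a n ≠ 0)
    (p q : ℕ) (hp : p.Prime) (hq : q.Prime)
    (k : ℕ)
    (j : ℕ) (hj2 : j ≤ n - 1)
    (hjmult : ¬ (n / Nat.gcd k n) ∣ j)
    (hp1 : ∀ i ≤ n, i ≠ j → (p : ℤ) ∣ a i)
    (hp2 : ¬ (p : ℤ) ∣ a j)
    (hp3 : ¬ (p : ℤ)^2 ∣ a 0)
    (hp4 : ¬ (p : ℤ)^2 ∣ a n)
    (hq1 : ¬ (q : ℤ) ∣ a 0)
    (hq2 : ∀ i, 1 ≤ i → i ≤ n → (q : ℤ)^k ∣ a i)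
    (hq3 : ¬ (q : ℤ)^(k+1) ∣ a n) :
    Irreducible ((∑ i ∈ range (n+1), C (a i) * X ^ i).map (Int.castRingHom ℚ)) := by
  have := Fact.mk hq
  set f := ∑ i ∈ range (n + 1), C (a i) * X ^ i
  have hcoeff : ∀ i, f.coeff i = if i ≤ n then a i else 0 := coeff_sum_range_C_mul_X_pow a n
  have hdeg : f.natDegree = n := natDegree_sum_range_C_mul_X_pow a han
  have hlead : f.leadingCoeff = a n := by simp [leadingCoeff, hdeg, hcoeff]
  have hpi : ∀ i ≠ j, (p : ℤ) ∣ f.coeff i := fun i hi => by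
    rw [hcoeff]; split_ifs with hin
    exacts [hp1 i hin hi, dvd_zero _]
  have hpj : ¬ (p : ℤ) ∣ f.coeff j := by rwa [hcoeff, if_pos (by omega)]
  have hp0 : ¬ (p : ℤ) ^ 2 ∣ f.coeff 0 := by rwa [hcoeff, if_pos (Nat.zero_le _)]
  have hq0 : ¬ (q : ℤ) ∣ f.coeff 0 := by rwa [hcoeff, if_pos (Nat.zero_le _)]
  have hqi : ∀ i ≠ 0, (q : ℤ) ^ k ∣ f.coeff i := fun i hi => by
    rw [hcoeff]; split_ifs with hin
    exacts [hq2 i (Nat.one_le_iff_ne_zero.2 hi) hin, dvd_zero _]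
  refine irreducible_map_intCast_of_forall_mul_eq (by omega) fun g h hf => ?_
  by_contra! hpos
  rw [hf] at hdeg hlead hpi hpj hp0 hq0 hqi
  have hqg := natDegree_mul_dvd_of_pow_dvd_coeff hq0 hqi (hlead ▸ hq3)
  have hqh := natDegree_mul_dvd_of_pow_dvd_coeff (q := q) (k := k) (g := h) (h := g)
    (by rwa [mul_comm]) (by rwa [mul_comm]) (by rwa [mul_comm, hlead])
  rw [mul_comm, hdeg] at hqh
  rw [hdeg] at hqg
  rcases natDegree_eq_or_natDegree_eq_of_dvd_coeff (Nat.prime_iff_prime_int.1 hp)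
    (Nat.pos_of_ne_zero hpos.1) (Nat.pos_of_ne_zero hpos.2) hpi hpj hp0 (by rwa [hlead])
    with hj | hj
  · exact hjmult (hj ▸ Nat.div_gcd_dvd_of_dvd_mul (by omega) hqg)
  · exact hjmult (hj ▸ Nat.div_gcd_dvd_of_dvd_mul (by omega) hqh)

theorem corollary_1_5 (n : ℕ) (hn : 2 ≤ n) (a : ℕ → ℤ)
    (ha0 : a 0 ≠ 0) (han : a n ≠ 0)
    (p q : ℕ) (hp : p.Prime) (hq : q.Prime) (hpq : p ≠ q)
    (k : ℕ) (hk : 0 < k)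
    (j : ℕ) (hj1 : 1 ≤ j) (hj2 : j ≤ n - 1)
    (hjmult : ¬ (n / Nat.gcd k n) ∣ j)
    (hp1 : ∀ i ≤ n, i ≠ j → (p : ℤ) ∣ a i)
    (hp2 : ¬ (p : ℤ) ∣ a j)
    (hp3 : ¬ (p : ℤ)^2 ∣ a 0)
    (hp4 : ¬ (p : ℤ)^2 ∣ a n)
    (hq1 : ¬ (q : ℤ) ∣ a 0)
    (hq2 : ∀ i, 1 ≤ i → i ≤ n → (q : ℤ)^k ∣ a i)
    (hq3 : ¬ (q : ℤ)^(k+1) ∣ a n) :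
    Irreducible ((∑ i ∈ range (n+1), C (a i) * X ^ i).map (Int.castRingHom ℚ)) :=
  corollary_1_5_general n hn a han p q hp hq k j hj2 hjmult hp1 hp2 hp3 hp4 hq1 hq2 hq3
end

section
/- Let f(X) = a_0 + a_1 X + ... + a_n X^n ∈ Z[X] with a_0 a_n ≠ 0. Suppose there exist two distinct primes p and q and a positive integer k such that: (i) p divides a_i for all i < n-1, p does not divide a_{n-1}, and p^2 does not divide a_0; (ii) q does not divide a_0, q^k divides a_i for all i > 0, q^{k+1} does not divide a_n, and n does not divide k. Then f is irreducible over Q. -/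
/-!
Condition (ii) says that the `q`-adic Newton polygon of `f` is the single segment from `(0, 0)`
to `(n, k)`; every root of `f` therefore has `q`-adic valuation `-k/n`, which is not an integer,
so `f` has no rational root. Condition (i) says `f ≡ X^(n-1) (a_(n-1) + a_n X) mod p`, and since
`p² ∤ a_0` one factor `u` of any factorization `f = u v` has a constant term prime to `p`. Then
`X^(n-1)` divides `v` mod `p`, so `u` has degree at most one; a linear factor would give a rational
root, so `u` is constant. By Gauss's lemma this is irreducibility over `ℚ`.
-/

open Polynomial Finset

theorem Finset.dvd_of_sum_eq_zero {ι R : Type*} [CommRing R] [DecidableEq ι] {s : Finset ι}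
    {x : ι → R} {d : R} (hs : ∑ i ∈ s, x i = 0) {j : ι} (hj : j ∈ s)
    (h : ∀ i ∈ s, i ≠ j → d ∣ x i) : d ∣ x j := by
  rw [← add_sum_erase s x hj, add_eq_zero_iff_eq_neg] at hs
  rw [hs, dvd_neg]
  exact dvd_sum fun i hi ↦ h i (mem_of_mem_erase hi) (ne_of_mem_erase hi)

namespace Polynomial

theorem le_natDegree_of_not_dvd_coeff_zero {R : Type*} [CommRing R] {p : R} (hp : Prime p)
    {u v : R[X]} {m : ℕ} (hu : ¬ p ∣ u.coeff 0) (hlow : ∀ i < m, p ∣ (u * v).coeff i)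
    (hm : ¬ p ∣ (u * v).coeff m) : m ≤ v.natDegree := by
  let I := Ideal.span {p}
  have : I.IsPrime := (Ideal.span_singleton_prime hp.ne_zero).mpr hp
  let φ := Ideal.Quotient.mk I
  have hφ (a : R) : φ a = 0 ↔ p ∣ a := Ideal.Quotient.eq_zero_iff_dvd p a
  have hX_dvd : X ^ m ∣ (u * v).map φ := by
    rw [X_pow_dvd_iff]
    intro i hi
    rw [coeff_map, hφ]
    exact hlow i hi
  have hX_not_dvd : ¬ X ∣ u.map φ := by
    rwa [X_dvd_iff, coeff_map, hφ]
  have hv : v.map φ ≠ 0 := by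
    intro hv
    apply hm
    rw [← hφ, ← coeff_map, Polynomial.map_mul, hv, mul_zero, coeff_zero]
  have hXv : X ^ m ∣ v.map φ := by
    rw [Polynomial.map_mul] at hX_dvd
    exact prime_X.pow_dvd_of_dvd_mul_left m hX_not_dvd hX_dvd
  calc m = (X ^ m : (R ⧸ I)[X]).natDegree := (natDegree_X_pow m).symm
    _ ≤ (v.map φ).natDegree := natDegree_le_of_dvd hXv hv
    _ ≤ v.natDegree := natDegree_map_le

theorem natDegree_le_one_of_not_dvd_coeff_zero {R : Type*} [CommRing R] [IsDomain R] {p : R}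
    (hp : Prime p) {f u v : R[X]} (hf : f ≠ 0) (huv : f = u * v) (hu : ¬ p ∣ u.coeff 0)
    (hlow : ∀ i < f.natDegree - 1, p ∣ f.coeff i) (hnext : ¬ p ∣ f.coeff (f.natDegree - 1)) :
    u.natDegree ≤ 1 := by
  subst huv
  have hv := le_natDegree_of_not_dvd_coeff_zero hp hu hlow hnext
  rw [natDegree_mul (left_ne_zero_of_mul hf) (right_ne_zero_of_mul hf)] at hv
  omega

/-- Since `(f.scaleRoots s).eval x = s ^ n * f.eval (x / s)`, this says that `f` has no root of
`q`-adic valuation `-t`. -/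
theorem eval_scaleRoots_ne_zero {R : Type*} [CommRing R] [IsDomain R] {f : R[X]} {q : R}
    (hq : Prime q) {k t : ℕ} (hkt : f.natDegree * t ≠ k) (h0 : ¬ q ∣ f.coeff 0)
    (hk : ∀ i, 0 < i → q ^ k ∣ f.coeff i) (hlead : ¬ q ^ (k + 1) ∣ f.leadingCoeff)
    {x y : R} (hx : ¬ q ∣ x) (hy : ¬ q ∣ y) : (f.scaleRoots (q ^ t * y)).eval x ≠ 0 := by
  intro hroot
  set n := f.natDegree
  rw [eval_eq_sum_range, natDegree_scaleRoots] at hroot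
  simp only [coeff_scaleRoots] at hroot
  have hterm0 :
      f.coeff 0 * (q ^ t * y) ^ (n - 0) * x ^ 0 = q ^ (n * t) * (f.coeff 0 * y ^ n) := by
    rw [Nat.sub_zero, pow_zero, mul_one, mul_pow, ← pow_mul]
    ring
  rcases lt_or_gt_of_ne hkt with hlt | hgt
  · -- the constant term has the smallest valuation `n t`
    have h := dvd_of_sum_eq_zero (d := q ^ (n * t + 1)) hroot (mem_range.mpr n.succ_pos)
      fun i _ hi ↦ (pow_dvd_pow q hlt).trans
        (((hk i (Nat.pos_of_ne_zero hi)).mul_right _).mul_right _)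
    rw [hterm0, pow_succ, mul_dvd_mul_iff_left (pow_ne_zero _ hq.ne_zero)] at h
    rcases hq.dvd_mul.mp h with h | h
    · exact h0 h
    · exact hy (hq.dvd_of_dvd_pow h)
  · -- the leading term has the smallest valuation `k`
    have ht : 0 < t := Nat.pos_of_ne_zero (by rintro rfl; omega)
    have h := dvd_of_sum_eq_zero (d := q ^ (k + 1)) hroot (self_mem_range_succ n)
      fun i hi hne ↦ by
        have hin : i < n := by rw [mem_range] at hi; omega
        rcases Nat.eq_zero_or_pos i with rfl | hi0
        · rw [hterm0]
          exact (pow_dvd_pow q hgt).mul_right _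
        · have hden : q ^ t ∣ (q ^ t * y) ^ (n - i) :=
            (dvd_mul_right _ _).trans (dvd_pow_self _ (Nat.sub_ne_zero_of_lt hin))
          have hterm : q ^ (k + t) ∣ f.coeff i * (q ^ t * y) ^ (n - i) := by
            rw [pow_add]
            exact mul_dvd_mul (hk i hi0) hden
          exact (pow_dvd_pow q (by omega)).trans (hterm.mul_right _)
    rw [Nat.sub_self, pow_zero, mul_one] at h
    exact hlead (hq.pow_dvd_of_dvd_mul_right _ (fun h ↦ hx (hq.dvd_of_dvd_pow h)) h)

theorem aeval_ne_zero_of_prime_pow_dvd_coeff {A K : Type*} [CommRing A] [IsDomain A]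
    [UniqueFactorizationMonoid A] [Field K] [Algebra A K] [IsFractionRing A K] {f : A[X]} {q : A}
    (hq : Prime q) {k : ℕ} (hnk : ¬ f.natDegree ∣ k) (h0 : ¬ q ∣ f.coeff 0)
    (hk : ∀ i, 0 < i → q ^ k ∣ f.coeff i) (hlead : ¬ q ^ (k + 1) ∣ f.leadingCoeff)
    (r : K) : aeval r f ≠ 0 := by
  intro hr
  have hnum : ¬ q ∣ IsFractionRing.num A r := fun h ↦ h0 (h.trans (num_dvd_of_is_root hr))
  obtain ⟨y, hden, hy⟩ := (FiniteMultiplicity.of_prime_left hq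
    (nonZeroDivisors.coe_ne_zero (IsFractionRing.den A r))).exists_eq_pow_mul_and_not_dvd
  have hroot := num_isRoot_scaleRoots_of_aeval_eq_zero hr
  rw [hden] at hroot
  exact eval_scaleRoots_ne_zero hq (fun h ↦ hnk ⟨_, h.symm⟩) h0 hk hlead hnum hy hroot

theorem irreducible_map_of_forall_natDegree_eq_zero {R K : Type*} [CommRing R] [IsDomain R]
    [NormalizedGCDMonoid R] [Field K] [Algebra R K] [IsFractionRing R K] {f : R[X]}
    (hf : 0 < f.natDegree) (h : ∀ u v, f = u * v → u.natDegree = 0 ∨ v.natDegree = 0) :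
    Irreducible (f.map (algebraMap R K)) := by
  have hc : f.content ≠ 0 := by
    rw [Ne, content_eq_zero_iff]
    rintro rfl
    simp at hf
  have hprim := f.isPrimitive_primPart
  have hunit_of_dvd {u : R[X]} (hu : u ∣ f.primPart) (hdeg : u.natDegree = 0) : IsUnit u := by
    rw [eq_C_of_natDegree_eq_zero hdeg] at hu ⊢
    exact isUnit_C.mpr (isPrimitive_iff_isUnit_of_C_dvd.mp hprim _ hu)
  have hirr : Irreducible f.primPart := by
    refine ⟨fun hunit ↦ ?_, fun u v huv ↦ ?_⟩
    · have := natDegree_eq_zero_of_isUnit hunit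
      rw [natDegree_primPart] at this
      omega
    · have hf_eq : f = (C f.content * u) * v := by
        rw [mul_assoc, ← huv]
        exact eq_C_content_mul_primPart f
      rcases h _ _ hf_eq with hu | hv
      · rw [natDegree_C_mul hc] at hu
        exact .inl (hunit_of_dvd (huv ▸ dvd_mul_right u v) hu)
      · exact .inr (hunit_of_dvd (huv ▸ dvd_mul_left v u) hv)
  rw [eq_C_content_mul_primPart f, Polynomial.map_mul, map_C, irreducible_isUnit_mul
    (isUnit_C.mpr ((IsFractionRing.injective R K).ne_iff' (map_zero _) |>.mpr hc).isUnit)]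
  exact (hprim.irreducible_iff_irreducible_map_fraction_map).mp hirr

theorem irreducible_map_of_prime_dvd_coeff_of_prime_pow_dvd_coeff {R K : Type*} [CommRing R]
    [IsDomain R] [NormalizedGCDMonoid R] [UniqueFactorizationMonoid R] [Field K] [Algebra R K]
    [IsFractionRing R K] {f : R[X]} {p q : R} (hp : Prime p) (hq : Prime q) {k : ℕ}
    (hf : 0 < f.natDegree)
    (hp1 : ∀ i < f.natDegree - 1, p ∣ f.coeff i) (hp2 : ¬ p ∣ f.coeff (f.natDegree - 1))
    (hp3 : ¬ p ^ 2 ∣ f.coeff 0)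
    (hq1 : ¬ q ∣ f.coeff 0) (hq2 : ∀ i, 0 < i → q ^ k ∣ f.coeff i)
    (hq3 : ¬ q ^ (k + 1) ∣ f.leadingCoeff) (hnk : ¬ f.natDegree ∣ k) :
    Irreducible (f.map (algebraMap R K)) := by
  have hf0 : f ≠ 0 := ne_zero_of_natDegree_gt hf
  have natDegree_eq_zero_of_not_dvd {u v : R[X]} (huv : f = u * v) (hu : ¬ p ∣ u.coeff 0) :
      u.natDegree = 0 := by
    have hle := natDegree_le_one_of_not_dvd_coeff_zero hp hf0 huv hu hp1 hp2
    by_contra hne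
    have hdeg : (u.map (algebraMap R K)).degree = 1 := by
      rw [degree_map_eq_of_injective (IsFractionRing.injective R K),
        degree_eq_natDegree (left_ne_zero_of_mul (huv ▸ hf0)), (by omega : u.natDegree = 1)]
      rfl
    obtain ⟨r, hr⟩ := exists_root_of_degree_eq_one hdeg
    apply aeval_ne_zero_of_prime_pow_dvd_coeff hq hnk hq1 hq2 hq3 r
    rw [huv, map_mul, aeval_def, ← eval_map, hr.eq_zero, zero_mul]
  refine irreducible_map_of_forall_natDegree_eq_zero hf fun u v huv ↦ ?_
  have hcoprime : ¬ p ∣ u.coeff 0 ∨ ¬ p ∣ v.coeff 0 := by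
    rw [← not_and_or]
    rintro ⟨hu, hv⟩
    exact hp3 (by rw [huv, mul_coeff_zero, sq]; exact mul_dvd_mul hu hv)
  exact hcoprime.imp (natDegree_eq_zero_of_not_dvd huv)
    (natDegree_eq_zero_of_not_dvd (huv.trans (mul_comm u v)))

end Polynomial

theorem corollary_1_11_general (n : ℕ) (hn : 2 ≤ n) (a : ℕ → ℤ)
    (p q : ℕ) (hp : p.Prime) (hq : q.Prime)
    (k : ℕ)
    (hp1 : ∀ i < n - 1, (p : ℤ) ∣ a i)
    (hp2 : ¬ (p : ℤ) ∣ a (n - 1))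
    (hp3 : ¬ (p : ℤ)^2 ∣ a 0)
    (hq1 : ¬ (q : ℤ) ∣ a 0)
    (hq2 : ∀ i, 0 < i → i ≤ n → (q : ℤ)^k ∣ a i)
    (hq3 : ¬ (q : ℤ)^(k+1) ∣ a n)
    (hnk : ¬ n ∣ k) :
    Irreducible ((∑ i ∈ range (n+1), C (a i) * X ^ i).map (Int.castRingHom ℚ)) := by
  set f := ∑ i ∈ range (n + 1), C (a i) * X ^ i
  have hcoeff (i : ℕ) : f.coeff i = if i < n + 1 then a i else 0 := by
    simp only [f, finsetSum_coeff, coeff_C_mul_X_pow, sum_ite_eq, mem_range]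
  have hcoeff_le {i : ℕ} (hi : i ≤ n) : f.coeff i = a i := by rw [hcoeff, if_pos (by omega)]
  have hdeg : f.natDegree = n := by
    refine natDegree_eq_of_le_of_coeff_ne_zero ?_ ?_
    · exact natDegree_le_iff_coeff_eq_zero.mpr fun i hi ↦ by rw [hcoeff, if_neg (by omega)]
    · rw [hcoeff_le le_rfl]
      rintro h
      exact hq3 (h ▸ dvd_zero _)
  rw [← algebraMap_int_eq]
  refine irreducible_map_of_prime_dvd_coeff_of_prime_pow_dvd_coeff (k := k)
    (Nat.prime_iff_prime_int.mp hp) (Nat.prime_iff_prime_int.mp hq) (by omega) ?_ ?_ ?_ ?_ ?_ ?_ ?_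
  · rw [hdeg]
    intro i hi
    rw [hcoeff_le (by omega)]
    exact hp1 i hi
  · rwa [hdeg, hcoeff_le (by omega)]
  · rwa [hcoeff_le (by omega)]
  · rwa [hcoeff_le (by omega)]
  · intro i hi
    rw [hcoeff]
    split_ifs with h
    exacts [hq2 i hi (by omega), dvd_zero _]
  · rwa [leadingCoeff, hdeg, hcoeff_le le_rfl]
  · rwa [hdeg]

theorem corollary_1_11 (n : ℕ) (hn : 2 ≤ n) (a : ℕ → ℤ)
    (ha0 : a 0 ≠ 0) (han : a n ≠ 0)
    (p q : ℕ) (hp : p.Prime) (hq : q.Prime) (hpq : p ≠ q)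
    (k : ℕ) (hk : 0 < k)
    (hp1 : ∀ i < n - 1, (p : ℤ) ∣ a i)
    (hp2 : ¬ (p : ℤ) ∣ a (n - 1))
    (hp3 : ¬ (p : ℤ)^2 ∣ a 0)
    (hq1 : ¬ (q : ℤ) ∣ a 0)
    (hq2 : ∀ i, 0 < i → i ≤ n → (q : ℤ)^k ∣ a i)
    (hq3 : ¬ (q : ℤ)^(k+1) ∣ a n)
    (hnk : ¬ n ∣ k) :
    Irreducible ((∑ i ∈ range (n+1), C (a i) * X ^ i).map (Int.castRingHom ℚ)) :=
  corollary_1_11_general n hn a p q hp hq k hp1 hp2 hp3 hq1 hq2 hq3 hnk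
end
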